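/- arXiv:2512.11658 — 5 statements merged into one kernel-verified Lean document; each statement's English description precedes it below -/
import Mathlib

section
/- Let P ⊆ ℝⁿ be a convex polyhedron given as the intersection of a finite family of closed half-spaces H₁, …, H_l, and let P' be the intersection of all of these half-spaces except H₁ (so P' = H₂ ∩ ⋯ ∩ H_l, with P' = ℝⁿ if l = 1). Then P ⊆ P', and P' is the union of P and the closure of P' \ P. -/
/-- `H` is a closed half-space of `E` determined by a nonzero linear functional. -/
def IsClosedHalfspace {E : Type*} [NormedAddCommGroup E] [NormedSpace ℝ E]
    (H : Set E) : Prop :=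
  ∃ (ℓ : E →ₗ[ℝ] ℝ) (c : ℝ), ℓ ≠ 0 ∧ H = {x | ℓ x ≤ c}

theorem IsClosedHalfspace.isClosed {E : Type*} [NormedAddCommGroup E] [NormedSpace ℝ E]
    [FiniteDimensional ℝ E] {H : Set E} (hH : IsClosedHalfspace H) : IsClosed H := by
  obtain ⟨ℓ, c, -, rfl⟩ := hH
  exact isClosed_le ℓ.continuous_of_finiteDimensional continuous_const

theorem IsClosed.eq_union_closure_diff {X : Type*} [TopologicalSpace X] {s t : Set X}
    (ht : IsClosed t) (hst : s ⊆ t) : t = s ∪ closure (t \ s) := by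
  refine Set.Subset.antisymm ?_ (Set.union_subset hst (ht.closure_subset_iff.2 Set.sdiff_subset))
  calc t ⊆ s ∪ t := Set.subset_union_right
    _ = s ∪ (t \ s) := Set.union_sdiff_self.symm
    _ ⊆ s ∪ closure (t \ s) := Set.union_subset_union_right _ subset_closure

theorem stmt_3 {n l : ℕ} (hl : 1 ≤ l)
    (H : Fin l → Set (EuclideanSpace ℝ (Fin n)))
    (hH : ∀ i, IsClosedHalfspace (H i))
    (P P' : Set (EuclideanSpace ℝ (Fin n)))
    (hP : P = ⋂ i, H i)
    (hP' : P' = ⋂ i ∈ {i : Fin l | i ≠ ⟨0, hl⟩}, H i) :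
    P ⊆ P' ∧ P' = P ∪ closure (P' \ P) := by
  subst hP hP'
  have hsub : ⋂ i, H i ⊆ ⋂ i ∈ {i : Fin l | i ≠ ⟨0, hl⟩}, H i :=
    Set.subset_iInter₂ fun i _ => Set.iInter_subset H i
  exact ⟨hsub, (isClosed_biInter fun i _ => (hH i).isClosed).eq_union_closure_diff hsub⟩
end

section
/- Let (Cᵢ) be an increasing sequence of convex subsets of ℝⁿ, each of which is an intersection of at most N closed half-spaces (for a fixed N). Then the closure of their union is again an intersection of at most N closed half-spaces. -/
/-- `H` is a closed half-space of `ℝⁿ` (we allow the degenerate case `H = ℝⁿ`,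
corresponding to the zero functional). -/
def IsClosedHalfspaceOrUniv {E : Type*} [NormedAddCommGroup E]
    [InnerProductSpace ℝ E] (H : Set E) : Prop :=
  H = Set.univ ∨ ∃ (v : E) (c : ℝ), v ≠ 0 ∧ H = {x | inner ℝ v x ≤ (c : ℝ)}

/-!
Pass to a subsequence along which the affine hull of `C i` is the affine hull `M` of the union and
the set `T` of implicit equalities of the given representation of `C i` is constant. The
constraints in `T` cut out `M`; the remaining ones, with normals projected onto the direction of
`M` and normalized, range over a compact set, so a further subsequence converges. The closure of
the union is `M` intersected with the limit half-spaces: no limit constraint is tight on the union,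
because its normal lies in the direction of `M`, so there is a point strictly inside all of them,
and the segments from it to any point of the limit set lie in the union. This spends
`|T| + |Tᶜ| = N` half-spaces.
-/

open Filter Topology Set

variable {E : Type*} [NormedAddCommGroup E] [InnerProductSpace ℝ E]

def halfspace (a : E × ℝ) : Set E := {x | inner ℝ a.1 x ≤ a.2}

def IsInterOfHalfspaces (N : ℕ) (s : Set E) : Prop :=
  ∃ H : Fin N → Set E, (∀ j, IsClosedHalfspaceOrUniv (H j)) ∧ s = ⋂ j, H j

section Halfspace

@[simp]
lemma mem_halfspace {a : E × ℝ} {x : E} : x ∈ halfspace a ↔ inner ℝ a.1 x ≤ a.2 := Iff.rfl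

lemma IsClosedHalfspaceOrUniv.exists_eq_halfspace {H : Set E} (hH : IsClosedHalfspaceOrUniv H) :
    ∃ a, H = halfspace a := by
  rcases hH with rfl | ⟨v, c, -, rfl⟩
  · exact ⟨0, by ext; simp⟩
  · exact ⟨(v, c), rfl⟩

lemma isClosedHalfspaceOrUniv_halfspace {a : E × ℝ} (ha : (halfspace a).Nonempty) :
    IsClosedHalfspaceOrUniv (halfspace a) := by
  by_cases h : a.1 = 0
  · obtain ⟨x, hx⟩ := ha
    left
    ext y
    simpa [h] using hx
  · exact Or.inr ⟨a.1, a.2, h, rfl⟩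

lemma halfspace_smul (a : E × ℝ) {r : ℝ} (hr : 0 < r) : halfspace (r • a) = halfspace a := by
  ext x
  simp [real_inner_smul_left, mul_le_mul_iff_right₀ hr]

lemma convex_halfspace (a : E × ℝ) : Convex ℝ (halfspace a) :=
  convex_halfSpace_le (innerₛₗ ℝ a.1).isLinear a.2

lemma isClosed_halfspace (a : E × ℝ) : IsClosed (halfspace a) :=
  isClosed_le (continuous_const.inner continuous_id) continuous_const

lemma isClosed_setOf_mem_halfspace (x : E) : IsClosed {a : E × ℝ | x ∈ halfspace a} :=
  isClosed_le (continuous_fst.inner continuous_const) continuous_snd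

lemma isOpen_setOf_inner_lt (x : E) : IsOpen {a : E × ℝ | inner ℝ a.1 x < a.2} :=
  isOpen_lt (continuous_fst.inner continuous_const) continuous_snd

lemma isInterOfHalfspaces_iInter {ι : Type*} [Finite ι] {N : ℕ} {H : ι → Set E}
    (hH : ∀ i, IsClosedHalfspaceOrUniv (H i)) (hcard : Nat.card ι ≤ N) :
    IsInterOfHalfspaces N (⋂ i, H i) := by
  have := Fintype.ofFinite ι
  obtain ⟨e⟩ : Nonempty (ι ↪ Fin N) :=
    Function.Embedding.nonempty_of_card_le (by simpa [Nat.card_eq_fintype_card] using hcard)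
  refine ⟨fun j => ⋂ (i) (_ : e i = j), H i, fun j => ?_, ?_⟩
  · by_cases hj : ∃ i, e i = j
    · obtain ⟨i, rfl⟩ := hj
      simpa [e.injective.eq_iff] using hH i
    · left
      simp_all
  · rw [iInter_comm]
    simp

lemma isInterOfHalfspaces_iInter_inter_iInter {ι κ : Type*} [Finite ι] [Finite κ] {N : ℕ}
    {G : ι → Set E} {H : κ → Set E} (hG : ∀ i, IsClosedHalfspaceOrUniv (G i))
    (hH : ∀ i, IsClosedHalfspaceOrUniv (H i)) (hcard : Nat.card ι + Nat.card κ ≤ N) :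
    IsInterOfHalfspaces N ((⋂ i, G i) ∩ ⋂ i, H i) := by
  have := isInterOfHalfspaces_iInter (H := Sum.elim G H) (Sum.forall.2 ⟨hG, hH⟩)
    (Nat.card_sum.trans_le hcard)
  simpa only [iInter_sum, Sum.elim_inl, Sum.elim_inr] using this

lemma IsInterOfHalfspaces.exists_eq_iInter_halfspace {N : ℕ} {s : Set E}
    (hs : IsInterOfHalfspaces N s) : ∃ a : Fin N → E × ℝ, s = ⋂ j, halfspace (a j) := by
  obtain ⟨H, hH, rfl⟩ := hs
  choose a ha using fun j => (hH j).exists_eq_halfspace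
  exact ⟨a, iInter_congr ha⟩

end Halfspace

section ImplicitEqualities

lemma inner_eq_of_mem_affineSpan {s : Set E} {v : E} {c : ℝ} (hs : ∀ x ∈ s, inner ℝ v x = c)
    {x : E} (hx : x ∈ affineSpan ℝ s) : inner ℝ v x = c :=
  affineSpan_induction hx hs fun t u w y hu hw hy => by
    simp [inner_add_right, inner_sub_right, real_inner_smul_right, hu, hw, hy]

lemma exists_forall_lt_of_convexOn {F ι : Type*} [AddCommGroup F] [Module ℝ F] [Finite ι]
    {s : Set F} {f : ι → F → ℝ} {c : ι → ℝ} (hs : s.Nonempty) (hf : ∀ j, ConvexOn ℝ s (f j))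
    (hle : ∀ j, ∀ x ∈ s, f j x ≤ c j) (hlt : ∀ j, ∃ x ∈ s, f j x < c j) :
    ∃ x ∈ s, ∀ j, f j x < c j := by
  classical
  have := Fintype.ofFinite ι
  suffices ∀ J : Finset ι, ∃ x ∈ s, ∀ j ∈ J, f j x < c j by simpa using this Finset.univ
  intro J
  induction J using Finset.induction_on with
  | empty => exact hs.imp fun x hx => ⟨hx, by simp⟩
  | insert j J hj ih =>
    obtain ⟨x, hx, hxlt⟩ := ih
    obtain ⟨y, hy, hylt⟩ := hlt j
    have hmid : ∀ i, f i ((1 / 2 : ℝ) • x + (1 / 2 : ℝ) • y) ≤ 1 / 2 * f i x + 1 / 2 * f i y :=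
      fun i => (hf i).2 hx hy (by norm_num) (by norm_num) (by norm_num)
    refine ⟨(1 / 2 : ℝ) • x + (1 / 2 : ℝ) • y,
      (hf j).1 hx hy (by norm_num) (by norm_num) (by norm_num), ?_⟩
    simp only [Finset.forall_mem_insert]
    refine ⟨by linarith [hmid j, hle j x hx], fun i hi => ?_⟩
    linarith [hmid i, hxlt i hi, hle i y hy]

variable {ι : Type*}

def implicitEqualities (a : ι → E × ℝ) : Set ι :=
  {j | ∀ x ∈ ⋂ i, halfspace (a i), inner ℝ (a j).1 x = (a j).2}

lemma coe_affineSpan_iInter_halfspace [Finite ι] {a : ι → E × ℝ}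
    (hne : (⋂ i, halfspace (a i)).Nonempty) :
    (affineSpan ℝ (⋂ i, halfspace (a i)) : Set E) =
      ⋂ j : ↥(implicitEqualities a), halfspace (a j) := by
  set P := ⋂ i, halfspace (a i)
  set T := implicitEqualities a
  have hP : ∀ j, P ⊆ halfspace (a j) := iInter_subset _
  refine subset_antisymm ?_ fun x hx => ?_
  · exact fun x hx => mem_iInter.2 fun j => (inner_eq_of_mem_affineSpan j.2 hx).le
  obtain ⟨x₀, hx₀, hstrict⟩ : ∃ x₀ ∈ P, ∀ j : ↥Tᶜ, inner ℝ (a j).1 x₀ < (a j).2 := by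
    refine exists_forall_lt_of_convexOn hne
      (fun j => (innerₛₗ ℝ (a j).1).convexOn (convex_iInter fun i => convex_halfspace _))
      (fun j x hx => hP j hx) fun ⟨j, hj⟩ => ?_
    obtain ⟨y, hy, hne⟩ := not_forall₂.1 hj
    exact ⟨y, hy, lt_of_le_of_ne (hP j hy) hne⟩
  have hTc : ∀ᶠ t in 𝓝 (0 : ℝ), ∀ j : ↥Tᶜ, AffineMap.lineMap x₀ x t ∈ halfspace (a j) := by
    refine eventually_all.2 fun j => ?_
    have hcont : Continuous fun t : ℝ => inner ℝ (a j).1 (AffineMap.lineMap x₀ x t) :=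
      continuous_const.inner AffineMap.lineMap_continuous
    filter_upwards [(hcont.tendsto' 0 _ (by simp)).eventually_lt_const (hstrict j)] with t ht
    exact ht.le
  have hnear : ∀ᶠ t in 𝓝[>] (0 : ℝ), 0 < t ∧ AffineMap.lineMap x₀ x t ∈ P := by
    filter_upwards [Ioo_mem_nhdsGT one_pos, nhdsWithin_le_nhds hTc] with t ht hall
    refine ⟨ht.1, mem_iInter.2 fun j => ?_⟩
    by_cases hj : j ∈ T
    · exact (convex_halfspace _).lineMap_mem (hP j hx₀) (mem_iInter.1 hx ⟨j, hj⟩)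
        ⟨ht.1.le, ht.2.le⟩
    · exact hall ⟨j, hj⟩
  obtain ⟨t, ht, hyP⟩ := hnear.exists
  have key := (affineSpan ℝ P).smul_vsub_vadd_mem t⁻¹ (subset_affineSpan ℝ P hyP)
    (subset_affineSpan ℝ P hx₀) (subset_affineSpan ℝ P hx₀)
  rwa [AffineMap.lineMap_vsub_left, smul_smul, inv_mul_cancel₀ ht.ne', one_smul,
    vsub_vadd] at key

lemma iInter_halfspace_eq_affineSpan_inter [Finite ι] {a : ι → E × ℝ}
    (hne : (⋂ i, halfspace (a i)).Nonempty) :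
    ⋂ i, halfspace (a i) =
      (affineSpan ℝ (⋂ i, halfspace (a i)) : Set E) ∩
        ⋂ j : ↥(implicitEqualities a)ᶜ, halfspace (a j) := by
  rw [coe_affineSpan_iInter_halfspace hne]
  ext x
  simp only [mem_inter_iff, mem_iInter, Subtype.forall, mem_compl_iff]
  refine ⟨fun h => ⟨fun j _ => h j, fun j _ => h j⟩, fun h j => ?_⟩
  by_cases hj : j ∈ implicitEqualities a
  exacts [h.1 j hj, h.2 j hj]

end ImplicitEqualities

section Normalization

/-- Normalizing the pair `(v, c)` rather than `v` keeps this set compact while still containing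
`(0, 1)`, whose half-space is `univ`. -/
def normalizedParams (M : AffineSubspace ℝ E) : Set (E × ℝ) :=
  {a | a.1 ∈ M.direction ∧ ‖a‖ = 1}

lemma isCompact_normalizedParams [FiniteDimensional ℝ E] (M : AffineSubspace ℝ E) :
    IsCompact (normalizedParams M) := by
  have : normalizedParams M = Metric.sphere 0 1 ∩ Prod.fst ⁻¹' M.direction := by
    ext; simp [normalizedParams, and_comm]
  rw [this]
  exact (isCompact_sphere 0 1).inter_right
    (M.direction.closed_of_finiteDimensional.preimage continuous_fst)

lemma exists_mem_direction_inter_halfspace_eq (M : AffineSubspace ℝ E)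
    [M.direction.HasOrthogonalProjection] {p : E} (hp : p ∈ M) (a : E × ℝ) :
    ∃ b : E × ℝ, b.1 ∈ M.direction ∧ (M : Set E) ∩ halfspace a = (M : Set E) ∩ halfspace b := by
  set v := M.direction.starProjection a.1
  refine ⟨(v, a.2 - inner ℝ (a.1 - v) p), M.direction.starProjection_apply_mem _, ?_⟩
  ext x
  simp only [mem_inter_iff, mem_halfspace, SetLike.mem_coe]
  refine and_congr_right fun hx => ?_
  have h0 : inner ℝ (a.1 - v) (x - p) = 0 := Submodule.inner_left_of_mem_orthogonal
    (AffineSubspace.vsub_mem_direction hx hp) (M.direction.sub_starProjection_mem_orthogonal a.1)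
  simp only [inner_sub_left, inner_sub_right] at h0 ⊢
  constructor <;> intro h <;> linarith

lemma exists_normalizedParams_inter_halfspace_eq [FiniteDimensional ℝ E]
    (M : AffineSubspace ℝ E) {p : E} (hp : p ∈ M) (a : E × ℝ) :
    ∃ b ∈ normalizedParams M, (M : Set E) ∩ halfspace a = (M : Set E) ∩ halfspace b := by
  obtain ⟨b, hb, hab⟩ := exists_mem_direction_inter_halfspace_eq M hp a
  by_cases h : b = 0
  · refine ⟨(0, 1), ⟨M.direction.zero_mem, by simp [Prod.norm_def]⟩, ?_⟩
    rw [hab, h]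
    congr 1
    ext
    simp
  · refine ⟨‖b‖⁻¹ • b, ⟨M.direction.smul_mem _ hb, norm_smul_inv_norm h⟩, ?_⟩
    rw [hab, halfspace_smul b (inv_pos.2 (norm_pos_iff.2 h))]

lemma exists_normalizedParams_inter_iInter_halfspace_eq [FiniteDimensional ℝ E] {ι : Type*}
    {M : AffineSubspace ℝ E} (hM : (M : Set E).Nonempty) (a : ι → E × ℝ) :
    ∃ b : ι → E × ℝ, (∀ j, b j ∈ normalizedParams M) ∧
      (M : Set E) ∩ ⋂ j, halfspace (a j) = (M : Set E) ∩ ⋂ j, halfspace (b j) := by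
  obtain ⟨p, hp⟩ := hM
  choose b hb hab using fun j => exists_normalizedParams_inter_halfspace_eq M hp (a j)
  refine ⟨b, hb, ?_⟩
  ext x
  simp only [mem_inter_iff, mem_iInter]
  refine and_congr_right fun hx => forall_congr' fun j => ?_
  simpa [hx] using Set.ext_iff.1 (hab j) x

end Normalization

section Limit

lemma Monotone.eventually_affineSpan_eq [FiniteDimensional ℝ E] {C : ℕ → Set E}
    (hC : Monotone C) : ∀ᶠ i in atTop, affineSpan ℝ (C i) = affineSpan ℝ (⋃ i, C i) := by
  obtain ⟨n, hn⟩ := monotone_stabilizes_iff_noetherian.2 inferInstance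
    ⟨fun i => vectorSpan ℝ (C i), fun i j h => vectorSpan_mono ℝ (hC h)⟩
  rcases (⋃ i, C i).eq_empty_or_nonempty with h | ⟨x, hx⟩
  · exact Eventually.of_forall fun i => by rw [h, iUnion_eq_empty.1 h i]
  obtain ⟨i₁, hi₁⟩ := mem_iUnion.1 hx
  filter_upwards [eventually_ge_atTop (max n i₁)] with i hi
  refine le_antisymm (affineSpan_mono ℝ (subset_iUnion C i))
    (affineSpan_le.2 (iUnion_subset fun j => ?_))
  rcases le_total j i with hji | hij
  · exact (hC hji).trans (subset_affineSpan ℝ _)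
  have hspan : affineSpan ℝ (C j) = affineSpan ℝ (C i) := by
    refine AffineSubspace.ext_of_direction_eq ?_ ⟨x, subset_affineSpan ℝ _ (hC ?_ hi₁),
      subset_affineSpan ℝ _ (hC ?_ hi₁)⟩
    · simp only [direction_affineSpan]
      exact (hn j (by omega)).symm.trans (hn i (by omega))
    all_goals omega
  exact hspan ▸ subset_affineSpan ℝ _

lemma inner_lt_of_mem_openSegment {v x y z : E} {c : ℝ} (hx : inner ℝ v x < c)
    (hy : inner ℝ v y ≤ c) (hz : z ∈ openSegment ℝ x y) : inner ℝ v z < c := by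
  obtain ⟨s, t, hs, ht, hst, rfl⟩ := hz
  rw [inner_add_right, real_inner_smul_right, real_inner_smul_right]
  have hc : c = s * c + t * c := by rw [← add_mul, hst, one_mul]
  linarith [mul_lt_mul_of_pos_left hx hs, mul_le_mul_of_nonneg_left hy ht.le]

lemma exists_lt_of_subset_halfspace {U : Set E} (hU : U.Nonempty) {M : AffineSubspace ℝ E}
    (hM : M ≤ affineSpan ℝ U) {b : E × ℝ} (hb : b ∈ normalizedParams M)
    (hUb : U ⊆ halfspace b) : ∃ x ∈ U, inner ℝ b.1 x < b.2 := by
  by_contra! h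
  have htight : ∀ x ∈ U, inner ℝ b.1 x = b.2 := fun x hx => le_antisymm (hUb hx) (h x hx)
  obtain ⟨x, hx⟩ := hU
  have hshift : b.1 +ᵥ x ∈ affineSpan ℝ U := AffineSubspace.vadd_mem_of_mem_direction
    (AffineSubspace.direction_le hM hb.1) (subset_affineSpan ℝ U hx)
  have hb0 : b.1 = 0 := by
    have := inner_eq_of_mem_affineSpan htight hshift
    rw [vadd_eq_add, inner_add_right, htight x hx, add_eq_right] at this
    exact inner_self_eq_zero.1 this
  have := hb.2
  rw [Prod.norm_def, hb0, ← htight x hx, hb0] at this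
  simp at this

lemma iUnion_subset_halfspace_of_tendsto {D : ℕ → Set E} (hD : Monotone D) {c : ℕ → E × ℝ}
    (hc : ∀ k, D k ⊆ halfspace (c k)) {φ : ℕ → ℕ} (hφ : StrictMono φ) {b : E × ℝ}
    (hlim : Tendsto (fun l => c (φ l)) atTop (𝓝 b)) : ⋃ k, D k ⊆ halfspace b := by
  refine iUnion_subset fun k x hx => (isClosed_setOf_mem_halfspace x).mem_of_tendsto hlim ?_
  filter_upwards [eventually_ge_atTop k] with l hl
  exact hc _ (hD (hl.trans (hφ.id_le l)) hx)

lemma closure_iUnion_eq_inter_iInter [FiniteDimensional ℝ E] {ι : Type*} [Finite ι]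
    {M : AffineSubspace ℝ E} {D : ℕ → Set E} (hD : Monotone D) (hne : (D 0).Nonempty)
    (hM : M ≤ affineSpan ℝ (⋃ k, D k)) {a : ℕ → ι → E × ℝ}
    (ha : ∀ k j, a k j ∈ normalizedParams M)
    (hDa : ∀ k, D k = (M : Set E) ∩ ⋂ j, halfspace (a k j)) :
    ∃ H : ι → Set E, (∀ j, IsClosedHalfspaceOrUniv (H j)) ∧
      closure (⋃ k, D k) = (M : Set E) ∩ ⋂ j, H j := by
  set U := ⋃ k, D k
  have hDM : ∀ k, D k ⊆ M := fun k => (hDa k).symm ▸ inter_subset_left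
  have hUne : U.Nonempty := hne.mono (subset_iUnion D 0)
  have hUconv : Convex ℝ U := hD.directed_le.convex_iUnion fun k =>
    (hDa k).symm ▸ M.convex.inter (convex_iInter fun j => convex_halfspace _)
  obtain ⟨b, hb, φ, hφ, hlim⟩ := (isCompact_univ_pi fun _ => isCompact_normalizedParams M)
    |>.tendsto_subseq (x := a) fun k => mem_univ_pi.2 (ha k)
  replace hb : ∀ j, b j ∈ normalizedParams M := mem_univ_pi.1 hb
  have hlim' : ∀ j, Tendsto (fun l => a (φ l) j) atTop (𝓝 (b j)) := tendsto_pi_nhds.1 hlim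
  have hUb : ∀ j, U ⊆ halfspace (b j) := fun j => iUnion_subset_halfspace_of_tendsto hD
    (fun k => (hDa k).trans_subset (inter_subset_right.trans (iInter_subset _ j))) hφ (hlim' j)
  obtain ⟨z, hzU, hz⟩ : ∃ z ∈ U, ∀ j, inner ℝ (b j).1 z < (b j).2 :=
    exists_forall_lt_of_convexOn hUne (fun j => (innerₛₗ ℝ (b j).1).convexOn hUconv)
      (fun j x hx => hUb j hx) fun j => exists_lt_of_subset_halfspace hUne hM (hb j) (hUb j)
  have hmemU : ∀ y ∈ M, (∀ j, inner ℝ (b j).1 y < (b j).2) → y ∈ U := by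
    intro y hy hlt
    obtain ⟨l, hl⟩ := (eventually_all.2 fun j =>
      hlim' j ((isOpen_setOf_inner_lt y).mem_nhds (hlt j))).exists
    exact mem_iUnion.2 ⟨φ l, (hDa _).symm ▸ ⟨hy, mem_iInter.2 fun j => mem_halfspace.2 (hl j).le⟩⟩
  refine ⟨fun j => halfspace (b j), fun j => isClosedHalfspaceOrUniv_halfspace (hUne.mono (hUb j)),
    subset_antisymm ?_ ?_⟩
  · exact closure_minimal (subset_inter (iUnion_subset hDM) (subset_iInter hUb))
      (M.closed_of_finiteDimensional.inter (isClosed_iInter fun j => isClosed_halfspace _))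
  rintro x ⟨hxM, hx⟩
  have hzM : z ∈ M := iUnion_subset hDM hzU
  -- `z` is strictly inside every limit half-space, so the open segment from `z` to `x` lies in `U`
  refine closure_mono (fun y hy => hmemU y (M.convex.openSegment_subset hzM hxM hy) fun j => ?_)
    (segment_subset_closure_openSegment (right_mem_segment ℝ z x))
  exact inner_lt_of_mem_openSegment (hz j) (mem_iInter.1 hx j) hy

lemma Monotone.exists_subseq_eq_affineSpan_inter [FiniteDimensional ℝ E] {ι : Type*} [Finite ι]
    {C : ℕ → Set E} (hC : Monotone C) (hne : (⋃ i, C i).Nonempty) {a : ℕ → ι → E × ℝ}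
    (ha : ∀ i, C i = ⋂ j, halfspace (a i j)) :
    ∃ (T : Set ι) (ψ : ℕ → ℕ), StrictMono ψ ∧ (C (ψ 0)).Nonempty ∧
      (affineSpan ℝ (⋃ i, C i) : Set E) = ⋂ j : ↥T, halfspace (a (ψ 0) j) ∧
      ∀ k, C (ψ k) = (affineSpan ℝ (⋃ i, C i) : Set E) ∩ ⋂ j : ↥Tᶜ, halfspace (a (ψ k) j) := by
  obtain ⟨x, hx⟩ := hne
  obtain ⟨i₁, hi₁⟩ := mem_iUnion.1 hx
  have hgood : ∀ᶠ i in atTop,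
      affineSpan ℝ (C i) = affineSpan ℝ (⋃ i, C i) ∧ (⋂ j, halfspace (a i j)).Nonempty :=
    hC.eventually_affineSpan_eq.and <| (eventually_ge_atTop i₁).mono fun i hi =>
      ⟨x, ha i ▸ hC hi hi₁⟩
  obtain ⟨T, hT⟩ : ∃ T : Set ι, ∃ᶠ i in atTop, implicitEqualities (a i) = T := by
    obtain ⟨T, hT⟩ := Finite.exists_infinite_fiber fun i => implicitEqualities (a i)
    exact ⟨T, Nat.frequently_atTop_iff_infinite.2 (infinite_coe_iff.1 hT)⟩
  obtain ⟨ψ, hψ, hψT⟩ := extraction_of_frequently_atTop (hT.and_eventually hgood)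
  refine ⟨T, ψ, hψ, ha (ψ 0) ▸ (hψT 0).2.2, ?_, fun k => ?_⟩
  · obtain ⟨hT0, hspan, hne⟩ := hψT 0
    rw [← hspan, ← hT0, ha]
    exact coe_affineSpan_iInter_halfspace hne
  · obtain ⟨hTk, hspan, hne⟩ := hψT k
    rw [← hspan, ← hTk, ha]
    exact iInter_halfspace_eq_affineSpan_inter hne

end Limit

theorem stmt_7_general {n N : ℕ} (C : ℕ → Set (EuclideanSpace ℝ (Fin n)))
    (hmono : ∀ i, C i ⊆ C (i + 1))
    (hpoly : ∀ i, ∃ H : Fin N → Set (EuclideanSpace ℝ (Fin n)),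
      (∀ j, IsClosedHalfspaceOrUniv (H j)) ∧ C i = ⋂ j, H j) :
    ∃ H : Fin N → Set (EuclideanSpace ℝ (Fin n)),
      (∀ j, IsClosedHalfspaceOrUniv (H j)) ∧
      closure (⋃ i, C i) = ⋂ j, H j := by
  have hC : Monotone C := monotone_nat_of_le_succ hmono
  rcases (⋃ i, C i).eq_empty_or_nonempty with hU | hU
  · obtain ⟨H, hH, hC0⟩ := hpoly 0
    exact ⟨H, hH, by rw [hU, closure_empty, ← hC0, iUnion_eq_empty.1 hU 0]⟩
  choose a ha using fun i => IsInterOfHalfspaces.exists_eq_iInter_halfspace (hpoly i)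
  obtain ⟨T, ψ, hψ, hne, hMT, hCψ⟩ := hC.exists_subseq_eq_affineSpan_inter hU ha
  have hUψ : ⋃ k, C (ψ k) = ⋃ i, C i := hC.iUnion_comp_tendsto_atTop hψ.tendsto_atTop
  choose b hb hbeq using fun k => exists_normalizedParams_inter_iInter_halfspace_eq
    (hU.mono (subset_affineSpan ℝ _)) fun j : ↥Tᶜ => a (ψ k) j
  obtain ⟨H, hH, hcl⟩ := closure_iUnion_eq_inter_iInter (D := fun k => C (ψ k))
    (hC.comp hψ.monotone) hne (hUψ ▸ le_rfl) hb fun k => (hCψ k).trans (hbeq k)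
  rw [hUψ, hMT] at hcl
  rw [hcl]
  refine isInterOfHalfspaces_iInter_inter_iInter (fun j => ?_) hH ?_
  · exact isClosedHalfspaceOrUniv_halfspace
      (hne.mono ((ha (ψ 0)).trans_subset (iInter_subset _ _)))
  · classical
    rw [← Nat.card_sum, Nat.card_congr (Equiv.Set.sumCompl T), Nat.card_fin]

theorem stmt_7 {n N : ℕ} (C : ℕ → Set (EuclideanSpace ℝ (Fin n)))
    (hmono : ∀ i, C i ⊆ C (i + 1))
    (hconv : ∀ i, Convex ℝ (C i))
    (hpoly : ∀ i, ∃ H : Fin N → Set (EuclideanSpace ℝ (Fin n)),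
      (∀ j, IsClosedHalfspaceOrUniv (H j)) ∧ C i = ⋂ j, H j) :
    ∃ H : Fin N → Set (EuclideanSpace ℝ (Fin n)),
      (∀ j, IsClosedHalfspaceOrUniv (H j)) ∧
      closure (⋃ i, C i) = ⋂ j, H j :=
  stmt_7_general C hmono hpoly
end

section
/- Let X be a complete metric space and let (Cᵢ) be an increasing sequence of closed subsets of X, each isometric to a convex subset of ℝᵏ via isometries that are compatible (the isometry on Cᵢ₊₁ restricts, up to a Euclidean isometry, to the one on Cᵢ). Then the closure of ⋃ᵢ Cᵢ is isometric to a closed convex subset of ℝᵏ. -/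
/-! Composing the given rigid motions into motions `G i`, the embeddings `G i ∘ φ i` are
normalised so that each one extends the previous one on the nose.  They then glue to an isometry
of `⋃ i, C i` onto the increasing union of the convex sets `G i '' (φ i '' C i)`, which is convex.
An isometry into the complete space `ℝᵏ` extends to the closure, and since `X` is complete the
image of the closure is the closure of the image, a closed convex set. -/

open Set

theorem Isometry.exists_extend_closure {X Y : Type*} [MetricSpace X] [CompleteSpace X]
    [MetricSpace Y] [CompleteSpace Y] {s : Set X} {f : s → Y} (hf : Isometry f) :
    ∃ F : closure s → Y, Isometry F ∧ range F = closure (range f) := by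
  set ι : s → closure s := inclusion subset_closure
  have hι : IsUniformInducing ι :=
    (Isometry.of_dist_eq (f := ι) fun _ _ => rfl).isUniformInducing
  have hιd : DenseRange ι := (denseRange_inclusion_iff subset_closure).2 subset_rfl
  have hdi := hι.isDenseInducing hιd
  set F := hdi.extend f
  have hFc : Continuous F :=
    (uniformContinuous_uniformly_extend hι hιd hf.uniformContinuous).continuous
  have hFι : F ∘ ι = f := funext (hdi.extend_eq hf.continuous)
  have hF : Isometry F := Isometry.of_dist_eq <| isClosed_property2 hιd
    (isClosed_eq (hFc.fst'.dist hFc.snd') continuous_dist) fun a b => by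
      simp only [← Function.comp_apply (f := F), hFι, hf.dist_eq]; rfl
  have : CompleteSpace (closure s) := isClosed_closure.completeSpace_coe
  refine ⟨F, hF, (hFc.range_subset_closure_image_dense hιd).trans ?_ |>.antisymm ?_⟩
  · rw [← range_comp, hFι]
  · rw [hF.isUniformInducing.isComplete_range.isClosed.closure_subset_iff, ← hFι]
    exact range_comp_subset_range ι F

theorem exists_isometryEquiv_eqOn_succ {X E : Type*} [PseudoEMetricSpace E] {C : ℕ → Set X}
    {φ : ℕ → X → E} (h : ∀ i, ∃ g : E ≃ᵢ E, ∀ a ∈ C i, φ (i + 1) a = g (φ i a)) :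
    ∃ G : ℕ → E ≃ᵢ E, ∀ i, EqOn (G (i + 1) ∘ φ (i + 1)) (G i ∘ φ i) (C i) := by
  choose g hg using h
  refine ⟨fun n => Nat.rec (IsometryEquiv.refl E) (fun i Gi => (g i).symm.trans Gi) n,
    fun i a ha => ?_⟩
  simp [hg i a ha]

namespace MonotoneUnion

variable {X Y : Type*} {C : ℕ → Set X} {ψ : ℕ → X → Y}

theorem eqOn_of_le (hC : Monotone C) (h : ∀ i, EqOn (ψ (i + 1)) (ψ i) (C i)) {i j : ℕ}
    (hij : i ≤ j) : EqOn (ψ j) (ψ i) (C i) := by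
  induction hij with
  | refl => exact eqOn_refl _ _
  | step hij ih => exact fun x hx => (h _ (hC hij hx)).trans (ih hx)

theorem eq_of_mem (hC : Monotone C) (h : ∀ i, EqOn (ψ (i + 1)) (ψ i) (C i)) {i j : ℕ} {x : X}
    (hi : x ∈ C i) (hj : x ∈ C j) : ψ i x = ψ j x :=
  (eqOn_of_le hC h (le_max_left i j) hi).symm.trans (eqOn_of_le hC h (le_max_right i j) hj)

variable (hC : Monotone C) (h : ∀ i, EqOn (ψ (i + 1)) (ψ i) (C i))
include hC h

theorem monotone_image : Monotone fun i => ψ i '' C i := by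
  rintro i j hij _ ⟨x, hx, rfl⟩
  exact ⟨x, hC hij hx, eqOn_of_le hC h hij hx⟩

noncomputable def lift : (⋃ i, C i) → Y :=
  iUnionLift C (fun i x => ψ i x) (fun _ _ _ hi hj => eq_of_mem hC h hi hj) _ subset_rfl

theorem lift_of_mem (x : ⋃ i, C i) {i : ℕ} (hx : x.1 ∈ C i) : lift hC h x = ψ i x :=
  iUnionLift_of_mem x hx

theorem range_lift : range (lift hC h) = ⋃ i, ψ i '' C i := by
  ext y
  simp only [mem_range, mem_iUnion, mem_image]
  constructor
  · rintro ⟨x, rfl⟩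
    obtain ⟨i, hi⟩ := mem_iUnion.1 x.2
    exact ⟨i, x, hi, (lift_of_mem hC h x hi).symm⟩
  · rintro ⟨i, x, hi, rfl⟩
    exact ⟨⟨x, mem_iUnion.2 ⟨i, hi⟩⟩, lift_of_mem hC h _ hi⟩

theorem isometry_lift [PseudoMetricSpace X] [PseudoMetricSpace Y]
    (hψ : ∀ i, ∀ a ∈ C i, ∀ b ∈ C i, dist (ψ i a) (ψ i b) = dist a b) :
    Isometry (lift hC h) := by
  refine Isometry.of_dist_eq fun a b => ?_
  obtain ⟨i, ha⟩ := mem_iUnion.1 a.2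
  obtain ⟨j, hb⟩ := mem_iUnion.1 b.2
  have ha' := hC (le_max_left i j) ha
  have hb' := hC (le_max_right i j) hb
  rw [lift_of_mem hC h a ha', lift_of_mem hC h b hb', hψ _ _ ha' _ hb']
  rfl

end MonotoneUnion

theorem stmt_12_general {X : Type*} [MetricSpace X] [CompleteSpace X] {k : ℕ}
    (C : ℕ → Set X) (hmono : ∀ i, C i ⊆ C (i + 1))
    (φ : ℕ → X → EuclideanSpace ℝ (Fin k))
    -- each `φ i` is an isometry from `C i` onto a convex subset of `ℝᵏ`
    (hiso : ∀ i, ∀ a ∈ C i, ∀ b ∈ C i, dist (φ i a) (φ i b) = dist a b)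
    (hconv : ∀ i, Convex ℝ (φ i '' C i))
    -- the isometries are compatible up to rigid motions of `ℝᵏ`
    (hcompat : ∀ i, ∃ g : EuclideanSpace ℝ (Fin k) ≃ᵢ EuclideanSpace ℝ (Fin k),
      ∀ a ∈ C i, φ (i + 1) a = g (φ i a)) :
    ∃ K : Set (EuclideanSpace ℝ (Fin k)), IsClosed K ∧ Convex ℝ K ∧
      Nonempty ((closure (⋃ i, C i)) ≃ᵢ K) := by
  obtain ⟨G, hG⟩ := exists_isometryEquiv_eqOn_succ hcompat
  have hC : Monotone C := monotone_nat_of_le_succ hmono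
  have hψiso : ∀ i, ∀ a ∈ C i, ∀ b ∈ C i, dist (G i (φ i a)) (G i (φ i b)) = dist a b :=
    fun i a ha b hb => ((G i).dist_eq _ _).trans (hiso i a ha b hb)
  have hψconv : ∀ i, Convex ℝ ((G i ∘ φ i) '' C i) := fun i => by
    rw [image_comp]
    exact (hconv i).affine_image (G i).toRealAffineIsometryEquiv.toAffineMap
  obtain ⟨F, hF, hFrange⟩ := (MonotoneUnion.isometry_lift hC hG hψiso).exists_extend_closure
  refine ⟨range F, hFrange ▸ isClosed_closure, ?_, ⟨hF.isometryEquivOnRange⟩⟩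
  rw [hFrange, MonotoneUnion.range_lift]
  exact ((MonotoneUnion.monotone_image hC hG).directed_le.convex_iUnion hψconv).closure

theorem stmt_12 {X : Type*} [MetricSpace X] [CompleteSpace X] {k : ℕ}
    (C : ℕ → Set X) (hmono : ∀ i, C i ⊆ C (i + 1))
    (hclosed : ∀ i, IsClosed (C i))
    (φ : ℕ → X → EuclideanSpace ℝ (Fin k))
    -- each `φ i` is an isometry from `C i` onto a convex subset of `ℝᵏ`
    (hiso : ∀ i, ∀ a ∈ C i, ∀ b ∈ C i, dist (φ i a) (φ i b) = dist a b)
    (hconv : ∀ i, Convex ℝ (φ i '' C i))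
    -- the isometries are compatible up to rigid motions of `ℝᵏ`
    (hcompat : ∀ i, ∃ g : EuclideanSpace ℝ (Fin k) ≃ᵢ EuclideanSpace ℝ (Fin k),
      ∀ a ∈ C i, φ (i + 1) a = g (φ i a)) :
    ∃ K : Set (EuclideanSpace ℝ (Fin k)), IsClosed K ∧ Convex ℝ K ∧
      Nonempty ((closure (⋃ i, C i)) ≃ᵢ K) :=
  stmt_12_general C hmono φ hiso hconv hcompat
end

section
/- Let f : S¹ → S¹ be a surjective 1-Lipschitz map of the round circle (circumference 2π) to itself. Then f is an isometry. -/
/-!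
The circle is compact, so this is an instance of a general fact: a surjective non-expanding
self-map `f` of a compact metric space is an isometry. Pick a right inverse `g` of `f`. By
compactness two points `g^[m] x`, `g^[n] x` (`m < n`) of the backward orbit are `ε`-close, and
applying `f^[m+1]` shows that `f x` is `ε`-close to `g^[n-m-1] x`. Doing this for a pair `(a, b)`
in `X × X` gives `j` with `g^[j] a`, `g^[j] b` close to `f a`, `f b`; since `f^[j]` maps them back
to `a`, `b` without expanding distances, `dist a b ≤ dist (f a) (f b) + ε`.
-/

open Function

theorem LipschitzWith.prodMap {α β γ δ : Type*} [PseudoEMetricSpace α] [PseudoEMetricSpace β]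
    [PseudoEMetricSpace γ] [PseudoEMetricSpace δ] {K : NNReal} {f : α → β} {g : γ → δ}
    (hf : LipschitzWith K f) (hg : LipschitzWith K g) : LipschitzWith K (Prod.map f g) := by
  have h : LipschitzWith K fun p : α × γ => (f p.1, g p.2) := by
    simpa using (hf.comp LipschitzWith.prod_fst).prodMk (hg.comp LipschitzWith.prod_snd)
  exact h

section

variable {X : Type*} [PseudoMetricSpace X] [CompactSpace X] {f g : X → X}

theorem exists_dist_apply_iterate_rightInverse_lt (hf : LipschitzWith 1 f) (hg : RightInverse g f)
    (x : X) {ε : ℝ} (hε : 0 < ε) : ∃ j, dist (f x) (g^[j] x) < ε := by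
  obtain ⟨_, φ, hφ, hconv⟩ := CompactSpace.tendsto_subseq fun n => g^[n] x
  obtain ⟨N, hN⟩ := Metric.cauchySeq_iff'.1 hconv.cauchySeq ε hε
  set m := φ N
  set n := φ (N + 1)
  have hmn : m < n := hφ N.lt_succ_self
  have h_start : f^[m + 1] (g^[m] x) = f x := by
    rw [iterate_succ_apply', hg.iterate _ x]
  have h_end : f^[m + 1] (g^[n] x) = g^[n - (m + 1)] x := by
    rw [← hg.iterate (m + 1) (g^[n - (m + 1)] x), ← iterate_add_apply, Nat.add_sub_cancel' hmn]
  refine ⟨n - (m + 1), ?_⟩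
  calc dist (f x) (g^[n - (m + 1)] x)
      = dist (f^[m + 1] (g^[m] x)) (f^[m + 1] (g^[n] x)) := by rw [h_start, h_end]
    _ ≤ dist (g^[m] x) (g^[n] x) := by
        simpa using (hf.iterate (m + 1)).dist_le_mul (g^[m] x) (g^[n] x)
    _ < ε := by rw [dist_comm]; exact hN (N + 1) N.le_succ

theorem LipschitzWith.isometry_of_surjective (hf : LipschitzWith 1 f) (hsurj : Surjective f) :
    Isometry f := by
  obtain ⟨g, hg⟩ := hsurj.hasRightInverse
  refine Isometry.of_dist_eq fun a b => le_antisymm (by simpa using hf.dist_le_mul a b) ?_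
  refine le_of_forall_pos_lt_add fun ε hε => ?_
  obtain ⟨j, hj⟩ := exists_dist_apply_iterate_rightInverse_lt (hf.prodMap hf)
    (g := Prod.map g g) (fun p => Prod.ext (hg p.1) (hg p.2)) (a, b) (half_pos hε)
  simp only [Prod.map_iterate, Prod.map_apply, Prod.dist_eq, max_lt_iff] at hj
  calc dist a b ≤ dist (g^[j] a) (g^[j] b) := by
        simpa [hg.iterate j _] using (hf.iterate j).dist_le_mul (g^[j] a) (g^[j] b)
    _ ≤ dist (f a) (g^[j] a) + dist (f a) (f b) + dist (f b) (g^[j] b) := by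
        rw [dist_comm (f a)]; exact dist_triangle4 _ _ _ _
    _ < dist (f a) (f b) + ε := by linarith [hj.1, hj.2]

end

/-- A surjective 1-Lipschitz self-map of the round circle of circumference `2π`
(with its intrinsic arc-length metric) is an isometry. -/
theorem stmt_13 (f : AddCircle (2 * Real.pi) → AddCircle (2 * Real.pi))
    (hsurj : Function.Surjective f) (hlip : LipschitzWith 1 f) :
    Isometry f := by
  have : Fact (0 < 2 * Real.pi) := ⟨by positivity⟩
  exact hlip.isometry_of_surjective hsurj
end

section
/- Let f : X → Y be a surjective 1-Lipschitz map between metric spaces of diameter exactly π, and assume that for every y ∈ Y there exists ȳ ∈ Y with d(y, ȳ) = π, and that X is geodesic. Then for every x ∈ X and every ε > 0 there exists x̄ ∈ X with d(x, x̄) = π such that f restricted to any geodesic from x to x̄ is an isometric embedding. -/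
/-!
A point `x̄` with `f x̄` antipodal to `f x` lies at distance exactly `π` from `x`: at least `π`
because `f` is 1-Lipschitz, at most `π` by the diameter of `X`. A 1-Lipschitz map that preserves
the distance between the endpoints of a geodesic is isometric along it: any shortening of a
subsegment would, by the triangle inequality, shorten the image of the whole geodesic.
-/

open Set

/-- `γ` is a (unit-speed) geodesic from `a` to `b` in a metric space. -/
def IsGeodesicFromTo {T : Type*} [MetricSpace T] (γ : ℝ → T) (a b : T) : Prop :=
  γ 0 = a ∧ γ (dist a b) = b ∧
    ∀ s ∈ Icc (0:ℝ) (dist a b), ∀ t ∈ Icc (0:ℝ) (dist a b),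
      dist (γ s) (γ t) = |s - t|

theorem Metric.dist_le_diam_univ {T : Type*} [PseudoMetricSpace T]
    (h : 0 < Metric.diam (univ : Set T)) (a b : T) : dist a b ≤ Metric.diam (univ : Set T) :=
  Metric.dist_le_diam_of_mem (not_not.mp fun hb => h.ne' (Metric.diam_eq_zero_of_unbounded hb))
    (mem_univ a) (mem_univ b)

theorem LipschitzWith.dist_le_of_one {T U : Type*} [PseudoMetricSpace T] [PseudoMetricSpace U]
    {f : T → U} (hf : LipschitzWith 1 f) (a b : T) : dist (f a) (f b) ≤ dist a b := by
  simpa using hf.dist_le_mul a b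

namespace IsGeodesicFromTo

variable {X Y : Type*} [MetricSpace X] [MetricSpace Y] {γ : ℝ → X} {a b : X} {f : X → Y}

theorem dist_comp_of_le (hγ : IsGeodesicFromTo γ a b) (hf : LipschitzWith 1 f)
    (hab : dist (f a) (f b) = dist a b) {s t : ℝ} (hs : s ∈ Icc 0 (dist a b))
    (ht : t ∈ Icc 0 (dist a b)) (hst : s ≤ t) :
    dist (f (γ s)) (f (γ t)) = t - s := by
  obtain ⟨hγa, hγb, hiso⟩ := hγ
  have h0 : (0 : ℝ) ∈ Icc 0 (dist a b) := ⟨le_rfl, dist_nonneg⟩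
  have hL : dist a b ∈ Icc 0 (dist a b) := ⟨dist_nonneg, le_rfl⟩
  have hdist : ∀ u ∈ Icc 0 (dist a b), ∀ v ∈ Icc 0 (dist a b), u ≤ v →
      dist (f (γ u)) (f (γ v)) ≤ v - u := fun u hu v hv huv => by
    calc dist (f (γ u)) (f (γ v)) ≤ dist (γ u) (γ v) := hf.dist_le_of_one _ _
      _ = v - u := by rw [hiso u hu v hv, abs_sub_comm, abs_of_nonneg (sub_nonneg.mpr huv)]
  have hfar : dist a b ≤ s + dist (f (γ s)) (f (γ t)) + (dist a b - t) :=
    calc dist a b = dist (f (γ 0)) (f (γ (dist a b))) := by rw [hγa, hγb, hab]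
      _ ≤ dist (f (γ 0)) (f (γ s)) + dist (f (γ s)) (f (γ t))
          + dist (f (γ t)) (f (γ (dist a b))) := dist_triangle4 _ _ _ _
      _ ≤ (s - 0) + dist (f (γ s)) (f (γ t)) + (dist a b - t) := by
        gcongr
        · exact hdist 0 h0 s hs hs.1
        · exact hdist t ht _ hL ht.2
      _ = s + dist (f (γ s)) (f (γ t)) + (dist a b - t) := by rw [sub_zero]
  exact le_antisymm (hdist s hs t ht hst) (by linarith)

theorem dist_comp_eq_abs (hγ : IsGeodesicFromTo γ a b) (hf : LipschitzWith 1 f)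
    (hab : dist (f a) (f b) = dist a b) :
    ∀ s ∈ Icc 0 (dist a b), ∀ t ∈ Icc 0 (dist a b), dist (f (γ s)) (f (γ t)) = |s - t| := by
  intro s hs t ht
  rcases le_total s t with hst | hts
  · rw [abs_sub_comm, abs_of_nonneg (sub_nonneg.mpr hst)]
    exact hγ.dist_comp_of_le hf hab hs ht hst
  · rw [dist_comm, abs_of_nonneg (sub_nonneg.mpr hts)]
    exact hγ.dist_comp_of_le hf hab ht hs hts

end IsGeodesicFromTo

theorem stmt_14_general {X Y : Type*} [MetricSpace X] [MetricSpace Y]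
    (f : X → Y) (hsurj : Function.Surjective f) (hlip : LipschitzWith 1 f)
    (hdiamX : Metric.diam (univ : Set X) = Real.pi)
    -- every point of `Y` has an antipode at distance `π`
    (hant : ∀ y : Y, ∃ ybar : Y, dist y ybar = Real.pi) :
    ∀ x : X, ∀ ε > (0:ℝ), ∃ xbar : X, dist x xbar = Real.pi ∧
      ∀ γ : ℝ → X, IsGeodesicFromTo γ x xbar →
        ∀ s ∈ Icc (0:ℝ) Real.pi, ∀ t ∈ Icc (0:ℝ) Real.pi,
          dist (f (γ s)) (f (γ t)) = |s - t| := by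
  intro x _ _
  obtain ⟨ybar, hybar⟩ := hant (f x)
  obtain ⟨xbar, rfl⟩ := hsurj ybar
  have hdist : dist x xbar = Real.pi := by
    refine le_antisymm ?_ (hybar ▸ hlip.dist_le_of_one x xbar)
    exact hdiamX ▸ Metric.dist_le_diam_univ (hdiamX ▸ Real.pi_pos) x xbar
  refine ⟨xbar, hdist, fun γ hγ => ?_⟩
  rw [← hdist]
  exact hγ.dist_comp_eq_abs hlip (hybar.trans hdist.symm)

theorem stmt_14 {X Y : Type*} [MetricSpace X] [MetricSpace Y]
    (f : X → Y) (hsurj : Function.Surjective f) (hlip : LipschitzWith 1 f)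
    (hdiamX : Metric.diam (univ : Set X) = Real.pi)
    (hdiamY : Metric.diam (univ : Set Y) = Real.pi)
    -- every point of `Y` has an antipode at distance `π`
    (hant : ∀ y : Y, ∃ ybar : Y, dist y ybar = Real.pi)
    -- `X` is geodesic
    (hgeo : ∀ a b : X, ∃ γ : ℝ → X, IsGeodesicFromTo γ a b) :
    ∀ x : X, ∀ ε > (0:ℝ), ∃ xbar : X, dist x xbar = Real.pi ∧
      ∀ γ : ℝ → X, IsGeodesicFromTo γ x xbar →
        ∀ s ∈ Icc (0:ℝ) Real.pi, ∀ t ∈ Icc (0:ℝ) Real.pi,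
          dist (f (γ s)) (f (γ t)) = |s - t| :=
  stmt_14_general f hsurj hlip hdiamX hant
end
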